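/- arXiv:2207.02713 — 2 statements merged into one kernel-verified Lean document; each statement's English description precedes it below -/
import Mathlib

section
/- For every ν > 1 and every x > 0, I_{ν−1}(x)/I_ν(x) < (ν + √(ν² + (ν/(ν − 1))·x²))/x. -/
/-- The modified Bessel function of the first kind,
`I_ν(x) = ∑_{k=0}^∞ (x/2)^{2k+ν} / (k! Γ(k+ν+1))`
(here `1/Γ` vanishes at nonpositive integer arguments, since `Real.Gamma` is `0` there). -/
noncomputable def besselI (ν x : ℝ) : ℝ :=
  ∑' k : ℕ, (x / 2) ^ (2 * (k : ℝ) + ν) / ((Nat.factorial k : ℝ) * Real.Gamma ((k : ℝ) + ν + 1))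

open Real


noncomputable def bT (μ x : ℝ) (k : ℕ) : ℝ :=
  (x / 2) ^ (2 * (k : ℝ) + μ) / ((Nat.factorial k : ℝ) * Real.Gamma ((k : ℝ) + μ + 1))

lemma arg_pos {μ : ℝ} (hμ : -1 < μ) (k : ℕ) : (0:ℝ) < (k : ℝ) + μ + 1 := by
  have : (0:ℝ) ≤ (k:ℝ) := Nat.cast_nonneg k
  linarith

lemma bT_pos {μ x : ℝ} (hμ : -1 < μ) (hx : 0 < x) (k : ℕ) : 0 < bT μ x k := by
  have h1 : (0:ℝ) < x / 2 := by linarith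
  have h2 := arg_pos hμ k
  have hg := Real.Gamma_pos_of_pos h2
  have hf : (0:ℝ) < (Nat.factorial k : ℝ) := by positivity
  exact div_pos (Real.rpow_pos_of_pos h1 _) (by positivity)

lemma bT_succ {μ x : ℝ} (hμ : -1 < μ) (hx : 0 < x) (k : ℕ) :
    bT μ x (k+1) = bT μ x k * ((x/2)^(2:ℕ) / (((k:ℝ)+1) * ((k:ℝ) + μ + 1))) := by
  have h1 : (0:ℝ) < x / 2 := by linarith
  have h2 := arg_pos hμ k
  have hpow : (x/2) ^ (2 * (((k+1):ℕ) : ℝ) + μ) = (x/2) ^ (2*(k:ℝ)+μ) * (x/2)^(2:ℕ) := by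
    have he : 2 * (((k+1):ℕ) : ℝ) + μ = (2*(k:ℝ)+μ) + ((2:ℕ):ℝ) := by push_cast; ring
    rw [he, Real.rpow_add h1, Real.rpow_natCast]
  have hfac : ((Nat.factorial (k+1) : ℝ)) = ((k:ℝ)+1) * (Nat.factorial k : ℝ) := by
    push_cast [Nat.factorial_succ]; ring
  have hgam : Real.Gamma ((((k+1):ℕ):ℝ) + μ + 1) = ((k:ℝ)+μ+1) * Real.Gamma ((k:ℝ)+μ+1) := by
    have he : (((k+1):ℕ):ℝ) + μ + 1 = ((k:ℝ)+μ+1) + 1 := by push_cast; ring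
    rw [he, Real.Gamma_add_one (ne_of_gt h2)]
  unfold bT
  rw [hpow, hfac, hgam]
  have hfk : (0:ℝ) < (Nat.factorial k : ℝ) := by positivity
  have hg := Real.Gamma_pos_of_pos h2
  field_simp

lemma bT_summable {μ x : ℝ} (hμ : -1 < μ) (hx : 0 < x) : Summable (bT μ x) := by
  apply summable_of_ratio_norm_eventually_le (r := 1/2) (by norm_num)
  rw [Filter.eventually_atTop]
  refine ⟨⌈x^2/2⌉₊ + ⌈(-μ)⌉₊, fun k hk => ?_⟩
  have hk1 : (⌈x^2/2⌉₊ : ℝ) ≤ (k:ℝ) := by exact_mod_cast le_trans (Nat.le_add_right _ _) hk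
  have hk2 : (⌈(-μ)⌉₊ : ℝ) ≤ (k:ℝ) := by exact_mod_cast le_trans (Nat.le_add_left _ _) hk
  have hx2 : x^2/2 ≤ (k:ℝ) := le_trans (Nat.le_ceil _) hk1
  have hmu : -μ ≤ (k:ℝ) := le_trans (Nat.le_ceil _) hk2
  have hD1 : (1:ℝ) ≤ (k:ℝ) + μ + 1 := by linarith
  have hD2 : x^2/2 ≤ ((k:ℝ)+1) := by linarith
  have hq : (x/2)^(2:ℕ) / (((k:ℝ)+1) * ((k:ℝ) + μ + 1)) ≤ 1/2 := by
    rw [div_le_iff₀ (by nlinarith)]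
    nlinarith
  have hqnn : 0 ≤ (x/2)^(2:ℕ) / (((k:ℝ)+1) * ((k:ℝ) + μ + 1)) := by positivity
  rw [bT_succ hμ hx k]
  have hb := bT_pos hμ hx k
  rw [Real.norm_eq_abs, Real.norm_eq_abs, abs_of_pos hb,
    abs_of_nonneg (mul_nonneg hb.le hqnn)]
  calc bT μ x k * ((x/2)^(2:ℕ) / (((k:ℝ)+1) * ((k:ℝ) + μ + 1)))
      ≤ bT μ x k * (1/2) := by
        exact mul_le_mul_of_nonneg_left hq hb.le
    _ = 1/2 * bT μ x k := by ring

lemma besselI_eq_tsum (ν x : ℝ) : besselI ν x = ∑' k, bT ν x k := rfl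

lemma besselI_pos {μ x : ℝ} (hμ : -1 < μ) (hx : 0 < x) : 0 < besselI μ x := by
  rw [besselI_eq_tsum]
  exact Summable.tsum_pos (bT_summable hμ hx) (fun k => (bT_pos hμ hx k).le) 0 (bT_pos hμ hx 0)

lemma besselI_rec {μ x : ℝ} (hμ : 0 < μ) (hx : 0 < x) :
    besselI (μ-1) x = besselI (μ+1) x + (2*μ/x) * besselI μ x := by
  have h1 : (0:ℝ) < x / 2 := by linarith
  have hμ1 : (-1:ℝ) < μ - 1 := by linarith
  have hμ2 : (-1:ℝ) < μ := by linarith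
  have hμ3 : (-1:ℝ) < μ + 1 := by linarith
  have h0 : bT (μ-1) x 0 = (2*μ/x) * bT μ x 0 := by
    unfold bT
    have e1 : 2 * ((0:ℕ):ℝ) + (μ - 1) = μ - 1 := by push_cast; ring
    have e2 : 2 * ((0:ℕ):ℝ) + μ = (μ - 1) + 1 := by push_cast; ring
    have e3 : ((0:ℕ):ℝ) + (μ-1) + 1 = μ := by push_cast; ring
    have e4 : ((0:ℕ):ℝ) + μ + 1 = μ + 1 := by push_cast; ring
    rw [e1, e2, e3, e4, Real.rpow_add h1, Real.rpow_one,
      Real.Gamma_add_one (ne_of_gt hμ)]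
    have hg := Real.Gamma_pos_of_pos hμ
    have hp := Real.rpow_pos_of_pos h1 (μ-1)
    simp only [Nat.factorial_zero, Nat.cast_one]
    field_simp
  have hs : ∀ k : ℕ, bT (μ-1) x (k+1) = bT (μ+1) x k + (2*μ/x) * bT μ x (k+1) := by
    intro k
    have h2 := arg_pos hμ2 k
    unfold bT
    have e1 : 2 * (((k+1):ℕ):ℝ) + (μ - 1) = 2*(k:ℝ) + μ + 1 := by push_cast; ring
    have e2 : 2 * ((k:ℕ):ℝ) + (μ + 1) = 2*(k:ℝ) + μ + 1 := by push_cast; ring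
    have e3 : 2 * (((k+1):ℕ):ℝ) + μ = (2*(k:ℝ) + μ + 1) + 1 := by push_cast; ring
    have e4 : (((k+1):ℕ):ℝ) + (μ-1) + 1 = (k:ℝ) + μ + 1 := by push_cast; ring
    have e5 : ((k:ℕ):ℝ) + (μ+1) + 1 = ((k:ℝ) + μ + 1) + 1 := by push_cast; ring
    have e6 : (((k+1):ℕ):ℝ) + μ + 1 = ((k:ℝ) + μ + 1) + 1 := by push_cast; ring
    have h3 : (x/2)^((2*(k:ℝ)+μ+1)+1) = (x/2)^(2*(k:ℝ)+μ+1) * (x/2) :=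
      Real.rpow_add_one (ne_of_gt h1) _
    rw [e1, e2, e3, e4, e5, e6, h3, Real.Gamma_add_one (ne_of_gt h2)]
    have hfac : ((Nat.factorial (k+1) : ℝ)) = ((k:ℝ)+1) * (Nat.factorial k : ℝ) := by
      push_cast [Nat.factorial_succ]; ring
    rw [hfac]
    have hg := Real.Gamma_pos_of_pos h2
    have hfk : (0:ℝ) < (Nat.factorial k : ℝ) := by positivity
    have hp := Real.rpow_pos_of_pos h1 (2*(k:ℝ)+μ+1)
    field_simp
    ring
  have hsum1 : Summable (bT (μ-1) x) := bT_summable hμ1 hx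
  have hsum2 : Summable (bT μ x) := bT_summable hμ2 hx
  have hsum3 : Summable (bT (μ+1) x) := bT_summable hμ3 hx
  have hsum2' : Summable (fun k => bT μ x (k+1)) := (summable_nat_add_iff 1).2 hsum2
  rw [besselI_eq_tsum, besselI_eq_tsum, besselI_eq_tsum,
    Summable.tsum_eq_zero_add hsum1, Summable.tsum_eq_zero_add hsum2, h0]
  have : ∑' k, bT (μ-1) x (k+1) = ∑' k, (bT (μ+1) x k + (2*μ/x) * bT μ x (k+1)) :=
    tsum_congr hs
  rw [this, Summable.tsum_add hsum3 (hsum2'.mul_left _), tsum_mul_left]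
  ring

lemma besselI_sq_lt {μ x : ℝ} (hμ : 0 < μ) (hx : 0 < x) :
    besselI μ x ^ 2 < ((μ+1)/μ) * (besselI (μ-1) x * besselI (μ+1) x) := by
  have h1 : (0:ℝ) < x / 2 := by linarith
  have hμ1 : (-1:ℝ) < μ - 1 := by linarith
  have hμ2 : (-1:ℝ) < μ := by linarith
  have hμ3 : (-1:ℝ) < μ + 1 := by linarith
  set a : ℕ → ℝ := bT μ x with ha
  set b : ℕ → ℝ := bT (μ-1) x with hb
  set c : ℕ → ℝ := bT (μ+1) x with hc
  have hapos : ∀ k, 0 < a k := bT_pos hμ2 hx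
  have hbpos : ∀ k, 0 < b k := bT_pos hμ1 hx
  have hcpos : ∀ k, 0 < c k := bT_pos hμ3 hx
  have key : ∀ k : ℕ, a k ^ 2 * ((k:ℝ)+μ) = b k * c k * ((k:ℝ)+μ+1) := by
    intro k
    have hkμ : (0:ℝ) < (k:ℝ) + μ := by
      have : (0:ℝ) ≤ (k:ℝ) := Nat.cast_nonneg k
      linarith
    have hkμ1 : (0:ℝ) < (k:ℝ) + μ + 1 := by linarith
    simp only [ha, hb, hc]
    unfold bT
    have hq0 : (x/2)^(2*((k:ℕ):ℝ) + (μ-1)) = (x/2)^(2*(k:ℝ)+μ-1) := by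
      congr 1
      ring
    have hq1 : (x/2)^(2*((k:ℕ):ℝ) + μ) = (x/2)^(2*(k:ℝ)+μ-1) * (x/2) := by
      rw [← Real.rpow_add_one (ne_of_gt h1)]
      congr 1
      ring
    have hq2 : (x/2)^(2*((k:ℕ):ℝ) + (μ+1)) = (x/2)^(2*(k:ℝ)+μ-1) * (x/2) * (x/2) := by
      rw [← Real.rpow_add_one (ne_of_gt h1), ← Real.rpow_add_one (ne_of_gt h1)]
      congr 1
      ring
    have g1 : Real.Gamma ((k:ℝ)+(μ-1)+1) = Real.Gamma ((k:ℝ)+μ) := by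
      congr 1
      ring
    have g2 : Real.Gamma ((k:ℝ)+μ+1) = ((k:ℝ)+μ) * Real.Gamma ((k:ℝ)+μ) :=
      Real.Gamma_add_one (ne_of_gt hkμ)
    have g3 : Real.Gamma ((k:ℝ)+(μ+1)+1)
        = ((k:ℝ)+μ+1) * (((k:ℝ)+μ) * Real.Gamma ((k:ℝ)+μ)) := by
      rw [show (k:ℝ)+(μ+1)+1 = ((k:ℝ)+μ+1)+1 by ring,
        Real.Gamma_add_one (ne_of_gt hkμ1), g2]
    rw [hq0, hq1, hq2, g1, g2, g3]
    have hg := Real.Gamma_pos_of_pos hkμ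
    have hfk : (0:ℝ) < (Nat.factorial k : ℝ) := by positivity
    have hp1 := Real.rpow_pos_of_pos h1 (2*(k:ℝ)+μ-1)
    field_simp
  set K : ℝ := Real.sqrt ((μ+1)/μ) with hK
  have hμμ : (0:ℝ) < (μ+1)/μ := div_pos (by linarith) hμ
  have hKpos : 0 < K := Real.sqrt_pos.2 hμμ
  set g : ℕ → ℝ := fun k => Real.sqrt (b k * c k) with hg
  have hgpos : ∀ k, 0 < g k := fun k => Real.sqrt_pos.2 (mul_pos (hbpos k) (hcpos k))
  -- a k ≤ K * g k, strict for k = 1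
  have hale : ∀ k, a k ≤ K * g k := by
    intro k
    have hkμ : (0:ℝ) < (k:ℝ) + μ := by
      have : (0:ℝ) ≤ (k:ℝ) := Nat.cast_nonneg k; linarith
    have hsq : a k ^ 2 ≤ ((μ+1)/μ) * (b k * c k) := by
      have hfrac : μ * ((k:ℝ)+μ+1) ≤ (μ+1) * ((k:ℝ)+μ) := by
        have : (0:ℝ) ≤ (k:ℝ) := Nat.cast_nonneg k; nlinarith
      have := key k
      have hbc : 0 < b k * c k := mul_pos (hbpos k) (hcpos k)
      rw [div_mul_eq_mul_div, le_div_iff₀ hμ]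
      nlinarith
    have hKg : (K * g k)^2 = ((μ+1)/μ) * (b k * c k) := by
      rw [mul_pow, hK, hg, Real.sq_sqrt hμμ.le,
        Real.sq_sqrt (mul_pos (hbpos k) (hcpos k)).le]
    have hKgnn : 0 ≤ K * g k := mul_nonneg hKpos.le (hgpos k).le
    exact le_of_pow_le_pow_left₀ (by norm_num) hKgnn (hsq.trans_eq hKg.symm)
  have halt : a 1 < K * g 1 := by
    have hkμ : (0:ℝ) < (1:ℝ) + μ := by linarith
    have hsq : a 1 ^ 2 < ((μ+1)/μ) * (b 1 * c 1) := by
      have hfrac : μ * (((1:ℕ):ℝ)+μ+1) < (μ+1) * (((1:ℕ):ℝ)+μ) := by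
        push_cast; nlinarith
      have := key 1
      have hbc : 0 < b 1 * c 1 := mul_pos (hbpos 1) (hcpos 1)
      rw [div_mul_eq_mul_div, lt_div_iff₀ hμ]
      push_cast at this ⊢
      nlinarith
    have hKg : (K * g 1)^2 = ((μ+1)/μ) * (b 1 * c 1) := by
      rw [mul_pow, hK, hg, Real.sq_sqrt hμμ.le,
        Real.sq_sqrt (mul_pos (hbpos 1) (hcpos 1)).le]
    exact lt_of_pow_lt_pow_left₀ 2 (mul_nonneg hKpos.le (hgpos 1).le)
      (hsq.trans_eq hKg.symm)
  have hasum : Summable a := bT_summable hμ2 hx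
  have hbsum : Summable b := bT_summable hμ1 hx
  have hcsum : Summable c := bT_summable hμ3 hx
  have hgsum : Summable g := by
    apply Summable.of_nonneg_of_le (fun k => (hgpos k).le) _ hasum
    intro k
    have hkμ : (0:ℝ) < (k:ℝ) + μ := by
      have : (0:ℝ) ≤ (k:ℝ) := Nat.cast_nonneg k; linarith
    have h2 : g k ^ 2 ≤ a k ^ 2 := by
      rw [hg, Real.sq_sqrt (mul_pos (hbpos k) (hcpos k)).le]
      nlinarith [key k, sq_nonneg (a k)]
    exact le_of_pow_le_pow_left₀ (by norm_num) (hapos k).le h2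
  have hKgsum : Summable (fun k => K * g k) := hgsum.mul_left K
  have step1 : besselI μ x < K * ∑' k, g k := by
    rw [besselI_eq_tsum]
    calc (∑' k, bT μ x k) < ∑' k, K * g k := Summable.tsum_lt_tsum hale halt hasum hKgsum
      _ = K * ∑' k, g k := tsum_mul_left
  set B := besselI (μ-1) x with hB
  set C := besselI (μ+1) x with hC
  have hBpos : 0 < B := besselI_pos hμ1 hx
  have hCpos : 0 < C := besselI_pos hμ3 hx
  have step2 : ∑' k, g k ≤ Real.sqrt B * Real.sqrt C := by
    apply Summable.tsum_le_of_sum_le hgsum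
    intro s
    have h1' : ∑ i ∈ s, g i = ∑ i ∈ s, Real.sqrt (b i) * Real.sqrt (c i) := by
      apply Finset.sum_congr rfl
      intro i _
      exact Real.sqrt_mul (hbpos i).le (c i)
    rw [h1']
    calc ∑ i ∈ s, Real.sqrt (b i) * Real.sqrt (c i)
        ≤ Real.sqrt (∑ i ∈ s, b i) * Real.sqrt (∑ i ∈ s, c i) :=
          Real.sum_sqrt_mul_sqrt_le s (fun i => (hbpos i).le) (fun i => (hcpos i).le)
      _ ≤ Real.sqrt B * Real.sqrt C := by
          apply mul_le_mul
          · exact Real.sqrt_le_sqrt (Summable.sum_le_tsum s (fun i _ => (hbpos i).le) hbsum)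
          · exact Real.sqrt_le_sqrt (Summable.sum_le_tsum s (fun i _ => (hcpos i).le) hcsum)
          · positivity
          · positivity
  have step3 : besselI μ x < K * (Real.sqrt B * Real.sqrt C) :=
    step1.trans_le (mul_le_mul_of_nonneg_left step2 hKpos.le)
  have hAnn : 0 ≤ besselI μ x := (besselI_pos hμ2 hx).le
  have hsq : (K * (Real.sqrt B * Real.sqrt C))^2 = ((μ+1)/μ) * (B * C) := by
    rw [mul_pow, mul_pow, hK, Real.sq_sqrt hμμ.le,
      Real.sq_sqrt hBpos.le, Real.sq_sqrt hCpos.le]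
  calc besselI μ x ^ 2 < (K * (Real.sqrt B * Real.sqrt C))^2 :=
        pow_lt_pow_left₀ step3 hAnn (by norm_num)
    _ = ((μ+1)/μ) * (B * C) := hsq


theorem besselI_ratio_upper_bound_10 (ν x : ℝ) (hν : 1 < ν) (hx : 0 < x) :
    besselI (ν - 1) x / besselI ν x <
      (ν + Real.sqrt (ν ^ 2 + (ν / (ν - 1)) * x ^ 2)) / x := by
  have hμ : (0:ℝ) < ν - 1 := by linarith
  have hrec := besselI_rec hμ hx
  have hsq := besselI_sq_lt hμ hx
  rw [show ν - 1 - 1 = ν - 2 by ring, show ν - 1 + 1 = ν by ring] at hrec hsq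
  set A := besselI (ν-1) x with hA
  set C := besselI ν x with hC
  have hApos : 0 < A := besselI_pos (by linarith) hx
  have hCpos : 0 < C := besselI_pos (by linarith) hx
  -- hsq : A^2 < ((ν-1+1)/(ν-1)) * (besselI (ν-2) x * C)
  rw [hrec] at hsq
  have hsq' : A^2 < (ν/(ν-1)) * C^2 + (2*ν/x) * (A * C) := by
    have hxne : x ≠ 0 := ne_of_gt hx
    have hνne : ν - 1 ≠ 0 := ne_of_gt hμ
    calc A^2 < ν/(ν-1) * ((C + 2*(ν-1)/x * A) * C) := hsq
      _ = (ν/(ν-1)) * C^2 + (2*ν/x) * (A * C) := by field_simp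
  set r := A / C with hr
  have hrC : r * C = A := div_mul_cancel₀ A (ne_of_gt hCpos)
  have hquad : r^2 < ν/(ν-1) + (2*ν/x) * r := by
    have h2 : r^2 * C^2 < (ν/(ν-1) + (2*ν/x) * r) * C^2 := by
      calc r^2 * C^2 = A^2 := by rw [← hrC]; ring
        _ < (ν/(ν-1)) * C^2 + (2*ν/x) * (A * C) := hsq'
        _ = (ν/(ν-1) + (2*ν/x) * r) * C^2 := by rw [← hrC]; ring
    exact lt_of_mul_lt_mul_right (by linarith [h2]) (sq_nonneg C)
  set S := ν ^ 2 + (ν / (ν - 1)) * x ^ 2 with hS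
  have hSpos : 0 < S := by
    rw [hS]
    have h1 : 0 < ν / (ν-1) := div_pos (by linarith) (by linarith)
    have h2 : 0 < x^2 := by positivity
    nlinarith [mul_pos h1 h2, sq_nonneg ν]
  have hkey : (r - ν/x)^2 < (Real.sqrt S / x)^2 := by
    rw [div_pow, Real.sq_sqrt hSpos.le, hS]
    have hx2 : (0:ℝ) < x^2 := by positivity
    rw [lt_div_iff₀ hx2]
    have hexp : (r - ν/x)^2 * x^2 = r^2 * x^2 - 2*ν*(r*x) + ν^2 := by
      field_simp; ring
    rw [hexp]
    have h3 : r^2 * x^2 < (ν/(ν-1)) * x^2 + (2*ν/x * r) * x^2 := by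
      nlinarith [hquad, sq_nonneg x]
    have h4 : (2*ν/x * r) * x^2 = 2*ν*(r*x) := by field_simp
    nlinarith [h3, h4]
  have hlt : r - ν/x < Real.sqrt S / x := by
    refine lt_of_pow_lt_pow_left₀ 2 (by positivity) ?_
    · exact hkey
  calc A / C = r := rfl
    _ < ν/x + Real.sqrt S / x := by linarith
    _ = (ν + Real.sqrt S) / x := by field_simp
end

section
/- For every ν ≥ 2 and every x > 0, K_{ν+1}(x)/K_ν(x) > (ν + 2 + √((ν − 2)² + ((ν − 2)/(ν − 1))·x²))/x. -/
/-!
Differentiating `e^{-x cosh t} sinh (ν t)` and integrating over `(0, ∞)` gives the recurrence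
`x (K_{ν+1} - K_{ν-1}) = 2ν K_ν`. Writing `K_a K_b` as a double integral symmetrized in the two
variables, the identity
`cosh ((p+q)s) cosh ((p-q)t) + cosh ((p-q)s) cosh ((p+q)t)
  = cosh (p(s+t)) cosh (q(s-t)) + cosh (p(s-t)) cosh (q(s+t))`
shows that `K_{p+q} K_{p-q}` is strictly increasing in `|q|`. Combined with the recurrence this is
the Turán-type inequality `(μ-1) K_{μ-1} K_{μ+1} < μ K_μ²`. For `μ = ν - 1`, after eliminating
`K_{ν-2}` by the recurrence, it says `(x K_{ν-1} + (ν-2) K_ν)² > E K_ν²`, where `E` is the radicand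
of the bound, and `x K_{ν+1} = x K_{ν-1} + 2ν K_ν` turns this into the claim.
-/

open Real MeasureTheory Set Filter Topology

/-- The modified Bessel function of the second kind,
`K_ν(x) = ∫_0^∞ e^{-x cosh t} cosh(ν t) dt`. -/
noncomputable def besselK (ν x : ℝ) : ℝ :=
  ∫ t in Set.Ioi (0 : ℝ), Real.exp (-x * Real.cosh t) * Real.cosh (ν * t)

lemma cosh_le_exp_abs (y : ℝ) : cosh y ≤ exp |y| := by
  rw [← cosh_abs, cosh_eq]
  linarith [exp_le_exp.2 (show -|y| ≤ |y| by linarith [abs_nonneg y])]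

lemma sq_div_four_le_cosh {t : ℝ} (ht : 0 ≤ t) : t ^ 2 / 4 ≤ cosh t := by
  rw [cosh_eq]
  nlinarith [quadratic_le_exp_of_nonneg ht, exp_pos (-t)]

section Integrand

variable {x : ℝ} (ν : ℝ)

lemma exp_neg_mul_cosh_mul_cosh_le (hx : 0 < x) {t : ℝ} (ht : 0 ≤ t) :
    exp (-x * cosh t) * cosh (ν * t) ≤ exp ((|ν| + 1) ^ 2 / x) * exp (-t) := by
  have hexp : -x * cosh t + |ν| * t ≤ (|ν| + 1) ^ 2 / x + -t := by
    have hsq : x * t ^ 2 / 4 - (|ν| + 1) * t + (|ν| + 1) ^ 2 / x =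
        (x * t / 2 - (|ν| + 1)) ^ 2 / x := by
      field_simp
      ring
    have hcosh := mul_le_mul_of_nonneg_left (sq_div_four_le_cosh ht) hx.le
    have hnonneg : 0 ≤ (x * t / 2 - (|ν| + 1)) ^ 2 / x := by positivity
    linarith
  calc exp (-x * cosh t) * cosh (ν * t) ≤ exp (-x * cosh t) * exp (|ν| * t) := by
        gcongr
        simpa [abs_mul, abs_of_nonneg ht] using cosh_le_exp_abs (ν * t)
    _ ≤ exp ((|ν| + 1) ^ 2 / x) * exp (-t) := by
        rw [← exp_add, ← exp_add]
        exact exp_le_exp.2 hexp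

lemma integrableOn_exp_neg_mul_cosh_mul_cosh (hx : 0 < x) :
    IntegrableOn (fun t ↦ exp (-x * cosh t) * cosh (ν * t)) (Ioi 0) := by
  have hdom : IntegrableOn (fun t ↦ exp ((|ν| + 1) ^ 2 / x) * exp (-t)) (Ioi 0) := by
    have h := (exp_neg_integrableOn_Ioi 0 one_pos).const_mul (exp ((|ν| + 1) ^ 2 / x))
    simp only [neg_mul, one_mul] at h
    exact h
  refine hdom.mono' (by fun_prop : Continuous _).aestronglyMeasurable ?_
  filter_upwards [ae_restrict_mem measurableSet_Ioi] with t ht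
  rw [norm_of_nonneg (by positivity)]
  exact exp_neg_mul_cosh_mul_cosh_le ν hx (le_of_lt ht)

lemma tendsto_exp_neg_mul_cosh_mul_sinh (hx : 0 < x) :
    Tendsto (fun t ↦ exp (-x * cosh t) * sinh (ν * t)) atTop (𝓝 0) := by
  have hbound : Tendsto (fun t ↦ exp ((|ν| + 1) ^ 2 / x) * exp (-t)) atTop (𝓝 0) := by
    simpa using tendsto_exp_neg_atTop_nhds_zero.const_mul (exp ((|ν| + 1) ^ 2 / x))
  refine squeeze_zero_norm' ?_ hbound
  filter_upwards [eventually_ge_atTop 0] with t ht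
  rw [norm_mul, norm_of_nonneg (exp_pos _).le, norm_eq_abs, abs_sinh]
  calc exp (-x * cosh t) * sinh |ν * t| ≤ exp (-x * cosh t) * cosh (ν * t) := by
        gcongr
        rw [← cosh_abs]
        exact (sinh_lt_cosh _).le
    _ ≤ _ := exp_neg_mul_cosh_mul_cosh_le ν hx ht

end Integrand

lemma besselK_recurrence (ν : ℝ) {x : ℝ} (hx : 0 < x) :
    x * (besselK (ν + 1) x - besselK (ν - 1) x) = 2 * ν * besselK ν x := by
  have hderiv : ∀ t ∈ Ici (0 : ℝ), HasDerivAt (fun t ↦ exp (-x * cosh t) * sinh (ν * t))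
      (ν * (exp (-x * cosh t) * cosh (ν * t)) - x / 2 *
        (exp (-x * cosh t) * cosh ((ν + 1) * t) - exp (-x * cosh t) * cosh ((ν - 1) * t))) t := by
    intro t _
    refine ((((hasDerivAt_cosh t).const_mul (-x)).exp).mul
      ((hasDerivAt_sinh (ν * t)).comp t ((hasDerivAt_id t).const_mul ν))).congr_deriv ?_
    simp only [add_mul, sub_mul, one_mul, cosh_add, cosh_sub, Function.comp_apply]
    ring
  have hK (c : ℝ) := integrableOn_exp_neg_mul_cosh_mul_cosh c hx
  have hint := integral_Ioi_of_hasDerivAt_of_tendsto' hderiv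
    (((hK ν).const_mul ν).sub (((hK (ν + 1)).sub (hK (ν - 1))).const_mul (x / 2)))
    (tendsto_exp_neg_mul_cosh_mul_sinh ν hx)
  rw [integral_sub, integral_const_mul, integral_const_mul, integral_sub] at hint
  · simp only [mul_zero, sinh_zero, sub_zero] at hint
    unfold besselK
    linarith
  exacts [hK (ν + 1), hK (ν - 1), (hK ν).const_mul ν,
    ((hK (ν + 1)).sub (hK (ν - 1))).const_mul (x / 2)]

lemma integral_pos_of_ae_pos {α : Type*} [MeasurableSpace α] {μ : Measure α} (hμ : μ ≠ 0)
    {f : α → ℝ} (hf : Integrable f μ) (hpos : ∀ᵐ a ∂μ, 0 < f a) : 0 < ∫ a, f a ∂μ := by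
  refine (integral_pos_iff_support_of_nonneg_ae (hpos.mono fun _ h ↦ h.le) hf).2
    (pos_iff_ne_zero.2 fun h0 ↦ hμ ?_)
  have hfalse : ∀ᵐ a ∂μ, False := by
    filter_upwards [hpos, μ.measure_support_eq_zero_iff.1 h0] with a h1 h2
    simp_all
  simpa using hfalse

lemma besselK_pos (ν : ℝ) {x : ℝ} (hx : 0 < x) : 0 < besselK ν x :=
  integral_pos_of_ae_pos (by simp) (integrableOn_exp_neg_mul_cosh_mul_cosh ν hx)
    (.of_forall fun t ↦ by positivity)

lemma cosh_mul_cosh_add_cosh_mul_cosh (p q s t : ℝ) :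
    cosh ((p + q) * s) * cosh ((p - q) * t) + cosh ((p - q) * s) * cosh ((p + q) * t) =
      cosh (p * (s + t)) * cosh (q * (s - t)) + cosh (p * (s - t)) * cosh (q * (s + t)) := by
  simp only [add_mul, sub_mul, mul_add, mul_sub, cosh_add, cosh_sub]
  ring

lemma cosh_mul_cosh_add_cosh_mul_cosh_lt {a b a' b' s t : ℝ} (hsum : a + b = a' + b')
    (hdiff : |a - b| < |a' - b'|) (hst : 0 < s + t) :
    cosh (a * s) * cosh (b * t) + cosh (b * s) * cosh (a * t) <
      cosh (a' * s) * cosh (b' * t) + cosh (b' * s) * cosh (a' * t) := by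
  obtain ⟨p, q, rfl, rfl⟩ : ∃ p q, a = p + q ∧ b = p - q :=
    ⟨(a + b) / 2, (a - b) / 2, by ring, by ring⟩
  obtain ⟨q', rfl, rfl⟩ : ∃ q', a' = p + q' ∧ b' = p - q' :=
    ⟨(a' - b') / 2, by linarith, by linarith⟩
  have hq : |q| < |q'| := by
    rw [show p + q - (p - q) = 2 * q by ring, show p + q' - (p - q') = 2 * q' by ring,
      abs_mul, abs_mul, abs_two] at hdiff
    linarith
  have hdiff_le : cosh (q * (s - t)) ≤ cosh (q' * (s - t)) := by
    rw [cosh_le_cosh, abs_mul, abs_mul]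
    exact mul_le_mul_of_nonneg_right hq.le (abs_nonneg _)
  have hsum_lt : cosh (q * (s + t)) < cosh (q' * (s + t)) := by
    rw [cosh_lt_cosh, abs_mul, abs_mul]
    exact mul_lt_mul_of_pos_right hq (abs_pos.2 hst.ne')
  rw [cosh_mul_cosh_add_cosh_mul_cosh, cosh_mul_cosh_add_cosh_mul_cosh]
  exact add_lt_add_of_le_of_lt (mul_le_mul_of_nonneg_left hdiff_le (cosh_pos _).le)
    (mul_lt_mul_of_pos_left hsum_lt (cosh_pos _))

lemma integral_prod_mul_add_mul_swap {α : Type*} [MeasurableSpace α] {μ : Measure α} [SFinite μ]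
    {f g : α → ℝ} (hf : Integrable f μ) (hg : Integrable g μ) :
    ∫ z, (f z.1 * g z.2 + g z.1 * f z.2) ∂(μ.prod μ) = 2 * ((∫ a, f a ∂μ) * ∫ a, g a ∂μ) := by
  rw [integral_add (hf.mul_prod hg) (hg.mul_prod hf), integral_prod_mul, integral_prod_mul]
  ring

lemma besselK_mul_besselK_lt {a b a' b' x : ℝ} (hx : 0 < x) (hsum : a + b = a' + b')
    (hdiff : |a - b| < |a' - b'|) :
    besselK a x * besselK b x < besselK a' x * besselK b' x := by
  set m := volume.restrict (Ioi (0 : ℝ))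
  set k : ℝ → ℝ → ℝ := fun c t ↦ exp (-x * cosh t) * cosh (c * t)
  have hK (c : ℝ) : Integrable (k c) m := integrableOn_exp_neg_mul_cosh_mul_cosh c hx
  have hsym (c d : ℝ) := integral_prod_mul_add_mul_swap (hK c) (hK d)
  have hsym_int (c d : ℝ) : Integrable (fun z : ℝ × ℝ ↦ k c z.1 * k d z.2 + k d z.1 * k c z.2)
      (m.prod m) := ((hK c).mul_prod (hK d)).add ((hK d).mul_prod (hK c))
  have hm : m.prod m ≠ 0 := by
    rw [Ne, ← Measure.measure_univ_eq_zero, ← univ_prod_univ, Measure.prod_prod]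
    simp [m]
  have hpos : 0 < ∫ z, ((k a' z.1 * k b' z.2 + k b' z.1 * k a' z.2) -
      (k a z.1 * k b z.2 + k b z.1 * k a z.2)) ∂(m.prod m) := by
    refine integral_pos_of_ae_pos hm ((hsym_int a' b').sub (hsym_int a b)) ?_
    rw [Measure.prod_restrict]
    filter_upwards [ae_restrict_mem (measurableSet_Ioi.prod measurableSet_Ioi)] with z hz
    have hlt := cosh_mul_cosh_add_cosh_mul_cosh_lt hsum hdiff (add_pos hz.1 hz.2)
    have hfactor : (k a' z.1 * k b' z.2 + k b' z.1 * k a' z.2) -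
        (k a z.1 * k b z.2 + k b z.1 * k a z.2) = exp (-x * cosh z.1) * exp (-x * cosh z.2) *
        ((cosh (a' * z.1) * cosh (b' * z.2) + cosh (b' * z.1) * cosh (a' * z.2)) -
          (cosh (a * z.1) * cosh (b * z.2) + cosh (b * z.1) * cosh (a * z.2))) := by
      simp only [k]
      ring
    rw [hfactor]
    exact mul_pos (by positivity) (sub_pos.2 hlt)
  rw [integral_sub, hsym, hsym] at hpos
  · unfold besselK
    linarith
  exacts [hsym_int a' b', hsym_int a b]

lemma besselK_turan (μ : ℝ) {x : ℝ} (hx : 0 < x) :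
    (μ - 1) * (besselK (μ - 1) x * besselK (μ + 1) x) < μ * besselK μ x ^ 2 := by
  have hspread : besselK (μ - 1) x * besselK μ x < besselK (μ - 2) x * besselK (μ + 1) x :=
    besselK_mul_besselK_lt hx (by ring) (by ring_nf; norm_num)
  have hrec := besselK_recurrence μ hx
  have hrec' := besselK_recurrence (μ - 1) hx
  rw [sub_add_cancel, sub_sub, one_add_one_eq_two] at hrec'
  have hgap : 2 * (μ * besselK μ x ^ 2 - (μ - 1) * (besselK (μ - 1) x * besselK (μ + 1) x)) =
      x * (besselK (μ - 2) x * besselK (μ + 1) x - besselK (μ - 1) x * besselK μ x) := by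
    linear_combination (-besselK μ x) * hrec + besselK (μ + 1) x * hrec'
  linarith [mul_pos hx (sub_pos.2 hspread)]

theorem besselK_ratio_lower_bound_30 (ν x : ℝ) (hν : 2 ≤ ν) (hx : 0 < x) :
    besselK (ν + 1) x / besselK ν x >
      (ν + 2 + Real.sqrt ((ν - 2) ^ 2 + ((ν - 2) / (ν - 1)) * x ^ 2)) / x := by
  have hK := besselK_pos ν hx
  have hK' := besselK_pos (ν - 1) hx
  have hrec := besselK_recurrence ν hx
  have hrec' := besselK_recurrence (ν - 1) hx
  have hturan := besselK_turan (ν - 1) hx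
  rw [sub_add_cancel, sub_sub, one_add_one_eq_two] at hrec' hturan
  set E := (ν - 2) ^ 2 + ((ν - 2) / (ν - 1)) * x ^ 2
  set R := x * besselK (ν - 1) x + (ν - 2) * besselK ν x
  have hν1 : 0 < ν - 1 := by linarith
  have hR : 0 < R := add_pos_of_pos_of_nonneg (mul_pos hx hK') (mul_nonneg (by linarith) hK.le)
  have hE : (ν - 1) * E = (ν - 2) ^ 2 * (ν - 1) + (ν - 2) * x ^ 2 := by
    simp only [E]
    field_simp
  have hsq : E * besselK ν x ^ 2 < R ^ 2 := by
    have key : (ν - 1) * (R ^ 2 - E * besselK ν x ^ 2) = x ^ 2 *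
        ((ν - 1) * besselK (ν - 1) x ^ 2 - (ν - 2) * (besselK (ν - 2) x * besselK ν x)) := by
      linear_combination (-besselK ν x ^ 2) * hE + (-(ν - 2) * x * besselK ν x) * hrec'
    have hpos : 0 < (ν - 1) * (R ^ 2 - E * besselK ν x ^ 2) :=
      key ▸ mul_pos (pow_pos hx 2) (sub_pos.2 hturan)
    exact sub_pos.1 (pos_of_mul_pos_right hpos hν1.le)
  have hsqrt : √E * besselK ν x < R := by
    have h := (sqrt_lt' hR).2 hsq
    rwa [sqrt_mul' _ (sq_nonneg _), sqrt_sq hK.le] at h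
  rw [gt_iff_lt, div_lt_div_iff₀ hx hK]
  linarith
end
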